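/- The matrix (-1 0; 0 -1) in SL₂(ℤ) can be written as a product of 6 matrices each conjugate in SL₂(ℤ) to the elementary Dehn twist (1 1; 0 1). -/

import Mathlib

/-- The elementary Dehn twist `U = (1 1; 0 1)` in SL₂(ℤ). -/
def dehnTwist : Matrix.SpecialLinearGroup (Fin 2) ℤ :=
  ⟨!![1, 1; 0, 1], by norm_num [Matrix.det_fin_two_of]⟩

/-- `-I` in SL₂(ℤ). -/
def negOne : Matrix.SpecialLinearGroup (Fin 2) ℤ :=
  ⟨!![-1, 0; 0, -1], by norm_num [Matrix.det_fin_two_of]⟩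

/-!
Take `gᵢ = Sⁱ` with `S = (0 -1; 1 0)`. The product of the conjugates `Sⁱ U S⁻ⁱ`, `i < 6`,
telescopes to `(U S)⁶ S⁻⁶`. Now `U S = (1 -1; 1 0)` has characteristic polynomial `x² - x + 1`,
so `(U S)³ = -I`, while `S² = -I`; hence the product is `I · (-I)⁻³ = -I`.
-/

theorem prod_map_range_pow_mul_mul_pow_inv {G : Type*} [Group G] (s u : G) (n : ℕ) :
    ((List.range n).map fun i => s ^ i * u * (s ^ i)⁻¹).prod = (u * s) ^ n * (s ^ n)⁻¹ := by
  induction n with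
  | zero => simp
  | succ n ih =>
    rw [List.range_succ, List.map_append, List.prod_append, ih]
    simp only [List.map_cons, List.map_nil, List.prod_cons, List.prod_nil, mul_one, pow_succ,
      mul_inv_rev, mul_assoc, inv_mul_cancel_left, mul_inv_cancel_left]

namespace ModularGroup

theorem T_mul_S_pow_three : (T * S) ^ 3 = -1 := by decide

theorem S_sq : S ^ 2 = -1 := by decide

end ModularGroup

theorem negOne_eq_neg_one : negOne = -1 := by decide

open ModularGroup MatrixGroups

/-- `-I ∈ SL₂(ℤ)` is a product of 6 conjugates of the elementary Dehn twist
`U = (1 1; 0 1)`: there exist `g₁,…,g₆ ∈ SL₂(ℤ)` with `-I = ∏ᵢ gᵢ U gᵢ⁻¹`. -/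
theorem stmt_3 :
    ∃ g : Fin 6 → Matrix.SpecialLinearGroup (Fin 2) ℤ,
      negOne = ((List.finRange 6).map fun i => g i * dehnTwist * (g i)⁻¹).prod := by
  refine ⟨fun i => S ^ (i : ℕ), ?_⟩
  have reindex :
      ((List.finRange 6).map fun i : Fin 6 => S ^ (i : ℕ) * dehnTwist * (S ^ (i : ℕ))⁻¹) =
        (List.range 6).map fun i => S ^ i * T * (S ^ i)⁻¹ := by
    rw [← List.map_coe_finRange_eq_range, List.map_map]
    rfl
  rw [reindex, prod_map_range_pow_mul_mul_pow_inv, negOne_eq_neg_one]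
  calc (-1 : SL(2, ℤ)) = (-1) ^ 2 * ((-1) ^ 3)⁻¹ := by decide
    _ = ((T * S) ^ 3) ^ 2 * ((S ^ 2) ^ 3)⁻¹ := by rw [T_mul_S_pow_three, S_sq]
    _ = (T * S) ^ 6 * (S ^ 6)⁻¹ := by simp only [← pow_mul]
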